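/- Let f be a piecewise contracting interval map on X with attractor Λ, and suppose f satisfies the separation property. Then for every x ∈ Λ, the decreasing sequence {B_k}_{k≥1} of atoms with x ∈ B_k ∈ 𝒜_k for all k ≥ 1 and ∩_{k≥1} B_k = {x} is unique. -/

import Mathlib

open Set Filter Metric Topology

/-- A piecewise contracting interval map (PCIM) on the compact interval `X = [a,b]`:
there are `N ≥ 1` pairwise disjoint nonempty open (relative to `X`) subintervals
whose closures cover `X`, and `f` contracts with rate `lam ∈ (0,1)` on each piece. -/
structure PCIM where
  a : ℝ
  b : ℝ
  hab : a < b
  N : ℕ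
  hN : 1 ≤ N
  f : ℝ → ℝ
  lam : ℝ
  hlam₀ : 0 < lam
  hlam₁ : lam < 1
  piece : Fin N → Set ℝ
  piece_nonempty : ∀ i, (piece i).Nonempty
  piece_interval : ∀ i, ∃ c d : ℝ, piece i = Set.Ioo c d ∩ Set.Icc a b
  piece_disjoint : ∀ i j, i ≠ j → Disjoint (piece i) (piece j)
  cover : Set.Icc a b = ⋃ i, closure (piece i)
  mapsTo : Set.MapsTo f (Set.Icc a b) (Set.Icc a b)
  contract : ∀ i, ∀ x ∈ piece i, ∀ y ∈ piece i, |f x - f y| ≤ lam * |x - y|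

namespace PCIM

variable (P : PCIM)

/-- The underlying compact interval `X`. -/
def X : Set ℝ := Set.Icc P.a P.b

/-- `X* = ⋃ i, X_i`, the union of the contraction pieces. -/
def Xstar : Set ℝ := ⋃ i, P.piece i

/-- `Δ = X \ X*`, the set of boundaries of the contraction pieces. -/
def Delta : Set ℝ := P.X \ P.Xstar

/-- `X̃ = ⋂_{j ≥ 0} f⁻ʲ(X*)`, the points all of whose iterates are well defined. -/
def Xtilde : Set ℝ := ⋂ j : ℕ, (P.f^[j]) ⁻¹' P.Xstar

/-- `D`: the set of one-sided limits of `f` at the points of `Δ`. -/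
def D : Set ℝ :=
  {L | ∃ c ∈ P.Delta,
    ((𝓝[P.X ∩ Set.Iio c] c).NeBot ∧ Filter.Tendsto P.f (𝓝[P.X ∩ Set.Iio c] c) (𝓝 L)) ∨
    ((𝓝[P.X ∩ Set.Ioi c] c).NeBot ∧ Filter.Tendsto P.f (𝓝[P.X ∩ Set.Ioi c] c) (𝓝 L))}

/-- A set `A` is `f`-pseudo-invariant if for every `x ∈ A` at least one of the
one-sided limits of `f` at `x` belongs to `A`. -/
def PseudoInvariant (A : Set ℝ) : Prop :=
  ∀ x ∈ A,
    (∃ L ∈ A, (𝓝[P.X ∩ Set.Iio x] x).NeBot ∧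
      Filter.Tendsto P.f (𝓝[P.X ∩ Set.Iio x] x) (𝓝 L)) ∨
    (∃ L ∈ A, (𝓝[P.X ∩ Set.Ioi x] x).NeBot ∧
      Filter.Tendsto P.f (𝓝[P.X ∩ Set.Ioi x] x) (𝓝 L))

/-- `f` is piecewise monotonic: strictly monotone on each contraction piece. -/
def PiecewiseMonotonic : Prop :=
  ∀ i, StrictMonoOn P.f (P.piece i) ∨ StrictAntiOn P.f (P.piece i)

/-- `f` satisfies the separation property: it is piecewise monotonic and the closures
of the images of distinct pieces are disjoint. -/
def SeparationProperty : Prop :=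
  P.PiecewiseMonotonic ∧
    ∀ i j, i ≠ j → closure (P.f '' P.piece i) ∩ closure (P.f '' P.piece j) = ∅

/-- The iterates `Λ_n` defining the attractor: `Λ_0 = X`,
`Λ_{n+1} = cl (f (Λ_n \ Δ))`. -/
def LambdaIter : (P : PCIM) → ℕ → Set ℝ
  | Q, 0 => Q.X
  | Q, n + 1 => closure (Q.f '' (LambdaIter Q n \ Q.Delta))

/-- The attractor `Λ = ⋂_{n ≥ 1} Λ_n`. -/
def Lambda : Set ℝ := ⋂ n : ℕ, P.LambdaIter (n + 1)

/-- The atom associated to the word `w = [i₁, …, iₙ]`: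
`A_{i₁…iₙ} = F_{iₙ} ∘ ⋯ ∘ F_{i₁}(X)` where `F_i(A) = cl (f (A ∩ X_i))`. -/
def atomOf (w : List (Fin P.N)) : Set ℝ :=
  w.foldl (fun A i => closure (P.f '' (A ∩ P.piece i))) P.X

/-- `𝒜_n`: the set of (nonempty) atoms of generation `n`. -/
def atoms (n : ℕ) : Set (Set ℝ) :=
  {A | ∃ w : List (Fin P.N), w.length = n ∧ P.atomOf w = A ∧ A.Nonempty}

/-- `θ` is the itinerary of `x`: `f^t(x) ∈ X_{θ_t}` for all `t`. -/
def IsItinerary (x : ℝ) (θ : ℕ → Fin P.N) : Prop :=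
  ∀ t : ℕ, P.f^[t] x ∈ P.piece (θ t)

/-- The word `θ_t θ_{t+1} … θ_{t+n-1}` of length `n` of the sequence `θ`. -/
def word (θ : ℕ → Fin P.N) (t n : ℕ) : List (Fin P.N) :=
  (List.range n).map fun k => θ (t + k)

/-- `L_n(θ)`: the set of words of length `n` occurring in `θ`. -/
def lang (θ : ℕ → Fin P.N) (n : ℕ) : Set (List (Fin P.N)) :=
  {w | ∃ t : ℕ, w = P.word θ t n}

/-- The complexity function `p_θ(n) = #L_n(θ)`. -/
noncomputable def complexity (θ : ℕ → Fin P.N) (n : ℕ) : ℕ := (P.lang θ n).ncard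

/-- The forward orbit of `x` under `f`. -/
def orbit (x : ℝ) : Set ℝ := {y | ∃ k : ℕ, P.f^[k] x = y}

/-- The ω-limit set of `x` under `f`. -/
def omegaLimitSet (x : ℝ) : Set ℝ :=
  ⋂ n : ℕ, closure {y | ∃ m : ℕ, n ≤ m ∧ P.f^[m] x = y}

/-- A compact pseudo-invariant set `A` is `X̃`-minimal if the orbit of every point
of `A ∩ X̃` is dense in `A`. -/
def XtildeMinimal (A : Set ℝ) : Prop :=
  IsCompact A ∧ P.PseudoInvariant A ∧ ∀ x ∈ A ∩ P.Xtilde, A ⊆ closure (P.orbit x)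

/-- A periodic orbit contained in `X̃`. -/
def IsPeriodicOrbit (A : Set ℝ) : Prop :=
  ∃ x ∈ P.Xtilde, ∃ p : ℕ, 1 ≤ p ∧ P.f^[p] x = x ∧ A = P.orbit x

end PCIM

/-- A Cantor set: nonempty, compact, perfect and totally disconnected. -/
def IsCantorSet (A : Set ℝ) : Prop :=
  A.Nonempty ∧ IsCompact A ∧ Perfect A ∧ IsTotallyDisconnected A

/-!
Under the separation property two atoms of the same generation are equal or disjoint, so the atom
of generation `k` containing `x` is unique. Induct on the generation: atoms whose words end in
letters `i ≠ j` lie in the disjoint sets `cl f(X_i)` and `cl f(X_j)`; atoms ending in the same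
letter are `cl f(A ∩ X_i)` and `cl f(A' ∩ X_i)` with `A`, `A'` equal or disjoint closed atoms. In
the disjoint case strict monotonicity of `f` on the interval `X_i` keeps the images apart: points
of `A ∩ X_i` and of `A' ∩ X_i` near limit points `l < l'` are separated by points `t < t'` of
`X_i`, so their images stay on either side of `f t` and `f t'`.
-/

theorem exists_tendsto_of_mem_closure_image {X Y : Type*} [TopologicalSpace X]
    [TopologicalSpace Y] {f : X → Y} {S : Set X} {z : Y} (hS : IsCompact (closure S))
    (hz : z ∈ closure (f '' S)) :
    ∃ l ∈ closure S, ∃ F : Filter X, F.NeBot ∧ F ≤ 𝓝[S] l ∧ Tendsto f F (𝓝 z) := by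
  have hne : (𝓟 S ⊓ comap f (𝓝 z)).NeBot := by
    rw [← map_neBot_iff f, Filter.push_pull, map_principal, inf_comm]
    exact mem_closure_iff_clusterPt.mp hz
  obtain ⟨l, hl, hcl⟩ := hS (f := 𝓟 S ⊓ comap f (𝓝 z))
    (inf_le_left.trans (principal_mono.mpr subset_closure))
  refine ⟨l, hl, 𝓝 l ⊓ (𝓟 S ⊓ comap f (𝓝 z)), hcl, ?_, ?_⟩
  · rw [nhdsWithin, ← inf_assoc]
    exact inf_le_left
  · exact tendsto_comap.mono_left (inf_le_right.trans inf_le_right)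

section StrictMonotone

variable {α β : Type*} [LinearOrder α] [TopologicalSpace α] [OrderClosedTopology α]
  [DenselyOrdered α] [LinearOrder β] [TopologicalSpace β] [OrderClosedTopology β]
  {f : α → β} {I : Set α} {F G : Filter α} [F.NeBot] [G.NeBot] {l l' : α} {z z' : β}

theorem StrictMonoOn.lt_of_tendsto (hf : StrictMonoOn f I) (hI : I.OrdConnected)
    (hF : F ≤ 𝓝[I] l) (hG : G ≤ 𝓝[I] l') (hFz : Tendsto f F (𝓝 z))
    (hGz : Tendsto f G (𝓝 z')) (hl : l < l') : z < z' := by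
  obtain ⟨t, hlt, htt'⟩ := exists_between hl
  obtain ⟨t', htt', ht'l'⟩ := exists_between htt'
  have hFt : I ∩ Iio t ∈ F := hF (inter_mem_nhdsWithin I (Iio_mem_nhds hlt))
  have hGt' : I ∩ Ioi t' ∈ G := hG (inter_mem_nhdsWithin I (Ioi_mem_nhds ht'l'))
  obtain ⟨p, hpI, hpt⟩ := Filter.nonempty_of_mem hFt
  obtain ⟨q, hqI, hqt'⟩ := Filter.nonempty_of_mem hGt'
  have htI : t ∈ I := hI.out hpI hqI ⟨hpt.le, (htt'.trans hqt').le⟩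
  have ht'I : t' ∈ I := hI.out hpI hqI ⟨(hpt.trans htt').le, hqt'.le⟩
  calc z ≤ f t := le_of_tendsto hFz (mem_of_superset hFt fun x hx => (hf hx.1 htI hx.2).le)
    _ < f t' := hf htI ht'I htt'
    _ ≤ z' := ge_of_tendsto hGz (mem_of_superset hGt' fun x hx => (hf ht'I hx.1 hx.2).le)

theorem StrictAntiOn.lt_of_tendsto (hf : StrictAntiOn f I) (hI : I.OrdConnected)
    (hF : F ≤ 𝓝[I] l) (hG : G ≤ 𝓝[I] l') (hFz : Tendsto f F (𝓝 z))
    (hGz : Tendsto f G (𝓝 z')) (hl : l < l') : z' < z :=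
  hf.dual_right.lt_of_tendsto (z := OrderDual.toDual z) (z' := OrderDual.toDual z') hI hF hG
    hFz hGz hl

theorem disjoint_closure_image_of_strictMonoOn_or_strictAntiOn {S S' : Set α}
    (hf : StrictMonoOn f I ∨ StrictAntiOn f I) (hI : I.OrdConnected) (hSI : S ⊆ I)
    (hS'I : S' ⊆ I) (hS : IsCompact (closure S)) (hS' : IsCompact (closure S'))
    (hd : Disjoint (closure S) (closure S')) :
    Disjoint (closure (f '' S)) (closure (f '' S')) := by
  refine disjoint_left.mpr fun z hz hz' => ?_
  obtain ⟨l, hl, F, _, hFS, hFz⟩ := exists_tendsto_of_mem_closure_image hS hz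
  obtain ⟨l', hl', G, _, hGS', hGz⟩ := exists_tendsto_of_mem_closure_image hS' hz'
  have hF : F ≤ 𝓝[I] l := hFS.trans (nhdsWithin_mono l hSI)
  have hG : G ≤ 𝓝[I] l' := hGS'.trans (nhdsWithin_mono l' hS'I)
  rcases (hd.ne_of_mem hl hl').lt_or_gt with h | h <;> rcases hf with hf | hf
  · exact (hf.lt_of_tendsto hI hF hG hFz hGz h).false
  · exact (hf.lt_of_tendsto hI hF hG hFz hGz h).false
  · exact (hf.lt_of_tendsto hI hG hF hGz hFz h).false
  · exact (hf.lt_of_tendsto hI hG hF hGz hFz h).false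

end StrictMonotone

namespace PCIM

variable (P : PCIM)

theorem atomOf_append_singleton (w : List (Fin P.N)) (i : Fin P.N) :
    P.atomOf (w ++ [i]) = closure (P.f '' (P.atomOf w ∩ P.piece i)) := by
  simp only [atomOf, List.foldl_append, List.foldl_cons, List.foldl_nil]

theorem isClosed_atomOf (w : List (Fin P.N)) : IsClosed (P.atomOf w) := by
  rcases w.eq_nil_or_concat' with rfl | ⟨w, i, rfl⟩
  · exact isClosed_Icc
  · rw [atomOf_append_singleton]
    exact isClosed_closure

theorem atomOf_append_singleton_subset (w : List (Fin P.N)) (i : Fin P.N) :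
    P.atomOf (w ++ [i]) ⊆ closure (P.f '' P.piece i) := by
  rw [atomOf_append_singleton]
  exact closure_mono (image_mono inter_subset_right)

theorem piece_subset_X (i : Fin P.N) : P.piece i ⊆ P.X := by
  obtain ⟨c, d, hcd⟩ := P.piece_interval i
  rw [hcd]
  exact inter_subset_right

theorem ordConnected_piece (i : Fin P.N) : (P.piece i).OrdConnected := by
  obtain ⟨c, d, hcd⟩ := P.piece_interval i
  rw [hcd]
  exact ordConnected_Ioo.inter ordConnected_Icc

variable {P}

theorem atomOf_eq_or_disjoint (hsep : P.SeparationProperty) {w w' : List (Fin P.N)}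
    (h : w.length = w'.length) :
    P.atomOf w = P.atomOf w' ∨ Disjoint (P.atomOf w) (P.atomOf w') := by
  induction w using List.reverseRecOn generalizing w' with
  | nil =>
    rw [List.eq_nil_of_length_eq_zero h.symm]
    exact Or.inl rfl
  | append_singleton w i ih =>
    obtain ⟨w', j, rfl⟩ : ∃ v j, w' = v ++ [j] :=
      (w'.eq_nil_or_concat').resolve_left (by rintro rfl; simp at h)
    by_cases hij : i = j
    · subst hij
      rcases ih (by simpa using h) with heq | hdisj
      · rw [atomOf_append_singleton, atomOf_append_singleton, heq]
        exact Or.inl rfl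
      right
      rw [atomOf_append_singleton, atomOf_append_singleton]
      have hcompact (A : Set ℝ) : IsCompact (closure (A ∩ P.piece i)) :=
        isCompact_Icc.closure_of_subset (inter_subset_right.trans (P.piece_subset_X i))
      exact disjoint_closure_image_of_strictMonoOn_or_strictAntiOn (hsep.1 i)
        (P.ordConnected_piece i) inter_subset_right inter_subset_right (hcompact _) (hcompact _)
        (hdisj.mono (closure_minimal inter_subset_left (P.isClosed_atomOf w))
          (closure_minimal inter_subset_left (P.isClosed_atomOf w')))
    · exact Or.inr ((disjoint_iff_inter_eq_empty.mpr (hsep.2 i j hij)).mono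
        (P.atomOf_append_singleton_subset w i) (P.atomOf_append_singleton_subset w' j))

theorem atoms_pairwiseDisjoint (hsep : P.SeparationProperty) (n : ℕ) :
    (P.atoms n).PairwiseDisjoint id := by
  rintro _ ⟨w, hw, rfl, -⟩ _ ⟨w', hw', rfl, -⟩ hne
  exact (atomOf_eq_or_disjoint hsep (hw.trans hw'.symm)).resolve_left hne

end PCIM

/-- Under the separation property, for every `x ∈ Λ` the
decreasing sequence of atoms `B_k ∈ 𝒜_k` with `x ∈ B_k` and `⋂ B_k = {x}`
is unique. -/
theorem decreasing_atoms_unique (P : PCIM) (hsep : P.SeparationProperty) :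
    ∀ x ∈ P.Lambda, ∀ B C : ℕ → Set ℝ,
      ((∀ k : ℕ, 1 ≤ k → x ∈ B k ∧ B k ∈ P.atoms k) ∧
        (∀ k : ℕ, 1 ≤ k → B (k + 1) ⊆ B k) ∧
        (⋂ k : ℕ, ⋂ (_ : 1 ≤ k), B k) = {x}) →
      ((∀ k : ℕ, 1 ≤ k → x ∈ C k ∧ C k ∈ P.atoms k) ∧
        (∀ k : ℕ, 1 ≤ k → C (k + 1) ⊆ C k) ∧
        (⋂ k : ℕ, ⋂ (_ : 1 ≤ k), C k) = {x}) →
      ∀ k : ℕ, 1 ≤ k → B k = C k := by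
  intro x _ B C hB hC k hk
  obtain ⟨hxB, hBk⟩ := hB.1 k hk
  obtain ⟨hxC, hCk⟩ := hC.1 k hk
  exact (P.atoms_pairwiseDisjoint hsep k).elim hBk hCk (not_disjoint_iff.mpr ⟨x, hxB, hxC⟩)
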